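/- arXiv:2504.01355 — 5 statements merged into one kernel-verified Lean document; each statement's English description precedes it below -/
import Mathlib

section
/- Double robustness of AIPW in the outcome model: if Λ(m1, m0) = m1(V) - m0(V) + D(Y - m1(V))/π(V) - (1-D)(Y - m0(V))/(1-π(V)) uses arbitrary (possibly misspecified) bounded functions m1, m0 of V but the true propensity score π(V) = P(D=1 | V), then E[Λ(m1, m0)] = E[μ1(V) - μ0(V)], where μd(V) = E[Y | D=d, V] are the true outcome regressions. -/
open MeasureTheory

/-- For a `𝒱`-measurable a.e.-bounded `g` and integrable `f`,
`∫ g f = ∫ g ⬝ E[f|𝒱]`. -/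
lemma integral_mul_condexp_aux {Ω : Type*} {mΩ : MeasurableSpace Ω} (μ : Measure Ω)
    [IsProbabilityMeasure μ] (𝒱 : MeasurableSpace Ω) (h𝒱 : 𝒱 ≤ mΩ)
    (g f : Ω → ℝ) (hg : Measurable[𝒱] g) (K : ℝ) (hgb : ∀ᵐ ω ∂μ, |g ω| ≤ K)
    (hf : Integrable f μ) :
    ∫ ω, g ω * f ω ∂μ = ∫ ω, g ω * (μ[f|𝒱]) ω ∂μ := by
  have hgae : AEStronglyMeasurable[mΩ] g μ :=
    ((hg.mono h𝒱 le_rfl).stronglyMeasurable).aestronglyMeasurable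
  have hgb' : ∀ᵐ ω ∂μ, ‖g ω‖ ≤ K := by
    filter_upwards [hgb] with ω h using h
  have hgf : Integrable (fun ω => g ω * f ω) μ := hf.bdd_mul hgae hgb'
  have hpull : μ[g * f|𝒱] =ᵐ[μ] g * μ[f|𝒱] :=
    condExp_mul_of_stronglyMeasurable_left hg.stronglyMeasurable hgf hf
  calc ∫ ω, g ω * f ω ∂μ = ∫ ω, (μ[g * f|𝒱]) ω ∂μ := (integral_condExp h𝒱).symm
    _ = ∫ ω, g ω * (μ[f|𝒱]) ω ∂μ := integral_congr_ae hpull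

/-- Double robustness of AIPW in the outcome model: with arbitrary
bounded covariate functions `m1, m0` but the true propensity score `π`,
`E[Λ(m1,m0)] = E[μ1(V) - μ0(V)]`. -/
theorem aipw_double_robust_outcome
    {Ω : Type*} (𝒱 : MeasurableSpace Ω) {mΩ : MeasurableSpace Ω} (μ : Measure Ω) [IsProbabilityMeasure μ]
    (h𝒱 : 𝒱 ≤ mΩ)
    (Y D π μ1 μ0 m1 m0 : Ω → ℝ) (ε : ℝ) (hε : 0 < ε)
    (hY : Integrable Y μ) (hD : ∀ ω, D ω = 0 ∨ D ω = 1)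
    (hDmeas : Measurable D)
    (hπmeas : Measurable[𝒱] π) (hμ1meas : Measurable[𝒱] μ1) (hμ0meas : Measurable[𝒱] μ0)
    (hm1meas : Measurable[𝒱] m1) (hm0meas : Measurable[𝒱] m0)
    (C : ℝ) (hm1bdd : ∀ ω, |m1 ω| ≤ C) (hm0bdd : ∀ ω, |m0 ω| ≤ C)
    (hμ1bdd : ∀ ω, |μ1 ω| ≤ C) (hμ0bdd : ∀ ω, |μ0 ω| ≤ C)
    (hπ : μ[D | 𝒱] =ᵐ[μ] π)
    (hπlb : ∀ᵐ ω ∂μ, ε ≤ π ω) (hπub : ∀ᵐ ω ∂μ, π ω ≤ 1 - ε)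
    (hμ1 : μ[fun ω => D ω * Y ω | 𝒱] =ᵐ[μ] fun ω => π ω * μ1 ω)
    (hμ0 : μ[fun ω => (1 - D ω) * Y ω | 𝒱] =ᵐ[μ] fun ω => (1 - π ω) * μ0 ω)
    (Λ : Ω → ℝ)
    (hΛ : ∀ ω, Λ ω = m1 ω - m0 ω + D ω * (Y ω - m1 ω) / π ω
          - (1 - D ω) * (Y ω - m0 ω) / (1 - π ω)) :
    ∫ ω, Λ ω ∂μ = ∫ ω, (μ1 ω - μ0 ω) ∂μ := by
  -- basic bounds and measurability
  have hD1 : ∀ ω, |D ω| ≤ 1 := by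
    intro ω; rcases hD ω with h | h <;> rw [h] <;> norm_num
  have hD1' : ∀ ω, |1 - D ω| ≤ 1 := by
    intro ω; rcases hD ω with h | h <;> rw [h] <;> norm_num
  have hm1int : Integrable m1 μ :=
    (integrable_const C).mono'
      ((hm1meas.mono h𝒱 le_rfl).stronglyMeasurable).aestronglyMeasurable
      (Filter.Eventually.of_forall fun ω => by simpa using hm1bdd ω)
  have hm0int : Integrable m0 μ :=
    (integrable_const C).mono'
      ((hm0meas.mono h𝒱 le_rfl).stronglyMeasurable).aestronglyMeasurable
      (Filter.Eventually.of_forall fun ω => by simpa using hm0bdd ω)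
  have hDae : AEStronglyMeasurable[mΩ] D μ := (hDmeas.stronglyMeasurable).aestronglyMeasurable
  have hD'ae : AEStronglyMeasurable[mΩ] (fun ω => 1 - D ω) μ :=
    ((measurable_const.sub hDmeas).stronglyMeasurable).aestronglyMeasurable
  -- the two correction terms
  set f1 : Ω → ℝ := fun ω => D ω * (Y ω - m1 ω) with hf1def
  set f0 : Ω → ℝ := fun ω => (1 - D ω) * (Y ω - m0 ω) with hf0def
  have hf1int : Integrable f1 μ :=
    (hY.sub hm1int).bdd_mul hDae (Filter.Eventually.of_forall fun ω => by simpa using hD1 ω)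
  have hf0int : Integrable f0 μ :=
    (hY.sub hm0int).bdd_mul hD'ae (Filter.Eventually.of_forall fun ω => by simpa using hD1' ω)
  set g1 : Ω → ℝ := fun ω => (π ω)⁻¹ with hg1def
  set g0 : Ω → ℝ := fun ω => (1 - π ω)⁻¹ with hg0def
  have hg1meas : Measurable[𝒱] g1 := hπmeas.inv
  have hg0meas : Measurable[𝒱] g0 := (measurable_const.sub hπmeas).inv
  have hπpos : ∀ᵐ ω ∂μ, 0 < π ω := by
    filter_upwards [hπlb] with ω h using lt_of_lt_of_le hε h
  have h1πpos : ∀ᵐ ω ∂μ, 0 < 1 - π ω := by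
    filter_upwards [hπub] with ω h using by linarith
  have hg1b : ∀ᵐ ω ∂μ, |g1 ω| ≤ ε⁻¹ := by
    filter_upwards [hπlb, hπpos] with ω h hp
    rw [abs_of_pos (inv_pos.mpr hp)]
    exact inv_anti₀ hε h
  have hg0b : ∀ᵐ ω ∂μ, |g0 ω| ≤ ε⁻¹ := by
    filter_upwards [hπub, h1πpos] with ω h hp
    rw [abs_of_pos (inv_pos.mpr hp)]
    exact inv_anti₀ hε (by linarith)
  -- integrability of D*Y, (1-D)*Y, D*m1, (1-D)*m0
  have hDYint : Integrable (fun ω => D ω * Y ω) μ :=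
    hY.bdd_mul hDae (Filter.Eventually.of_forall fun ω => by simpa using hD1 ω)
  have hDm1int : Integrable (fun ω => D ω * m1 ω) μ :=
    hm1int.bdd_mul hDae (Filter.Eventually.of_forall fun ω => by simpa using hD1 ω)
  have hD'Yint : Integrable (fun ω => (1 - D ω) * Y ω) μ :=
    hY.bdd_mul hD'ae (Filter.Eventually.of_forall fun ω => by simpa using hD1' ω)
  have hD'm0int : Integrable (fun ω => (1 - D ω) * m0 ω) μ :=
    hm0int.bdd_mul hD'ae (Filter.Eventually.of_forall fun ω => by simpa using hD1' ω)
  have hDint : Integrable D μ :=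
    (integrable_const (1:ℝ)).mono' hDae (Filter.Eventually.of_forall fun ω => by simpa using hD1 ω)
  -- conditional expectation of f1
  have hcf1 : μ[f1|𝒱] =ᵐ[μ] fun ω => π ω * (μ1 ω - m1 ω) := by
    have heq : f1 = fun ω => D ω * Y ω - m1 ω * D ω := by
      funext ω; simp only [hf1def]; ring
    have hsub : μ[f1|𝒱] =ᵐ[μ]
        μ[fun ω => D ω * Y ω|𝒱] - μ[fun ω => m1 ω * D ω|𝒱] := by
      rw [heq]
      exact condExp_sub hDYint (by simpa [mul_comm] using hDm1int) _
    have hpull : μ[fun ω => m1 ω * D ω|𝒱] =ᵐ[μ] fun ω => m1 ω * (μ[D|𝒱]) ω := by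
      have := condExp_mul_of_stronglyMeasurable_left (μ := μ) hm1meas.stronglyMeasurable
        (by rw [mul_comm]; exact hDm1int) hDint
      exact this
    filter_upwards [hsub, hpull, hμ1, hπ] with ω h1 h2 h3 h4
    have : (μ[f1|𝒱]) ω = (μ[fun ω => D ω * Y ω|𝒱]) ω - (μ[fun ω => m1 ω * D ω|𝒱]) ω := h1
    rw [this, h2, h3, h4]; ring
  -- conditional expectation of f0
  have hcf0 : μ[f0|𝒱] =ᵐ[μ] fun ω => (1 - π ω) * (μ0 ω - m0 ω) := by
    have heq : f0 = fun ω => (1 - D ω) * Y ω - m0 ω * (1 - D ω) := by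
      funext ω; simp only [hf0def]; ring
    have hD'int : Integrable (fun ω => 1 - D ω) μ := (integrable_const 1).sub hDint
    have hsub : μ[f0|𝒱] =ᵐ[μ]
        μ[fun ω => (1 - D ω) * Y ω|𝒱] - μ[fun ω => m0 ω * (1 - D ω)|𝒱] := by
      rw [heq]
      exact condExp_sub hD'Yint (by simpa [mul_comm] using hD'm0int) _
    have hpull : μ[fun ω => m0 ω * (1 - D ω)|𝒱] =ᵐ[μ]
        fun ω => m0 ω * (μ[fun ω => 1 - D ω|𝒱]) ω := by
      have := condExp_mul_of_stronglyMeasurable_left (μ := μ) hm0meas.stronglyMeasurable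
        (by rw [mul_comm]; exact hD'm0int) hD'int
      exact this
    have hcD' : μ[fun ω => 1 - D ω|𝒱] =ᵐ[μ] fun ω => 1 - π ω := by
      have h := condExp_sub (μ := μ) (m := 𝒱) (integrable_const (1:ℝ)) hDint
      have hc1 : μ[fun _ : Ω => (1:ℝ)|𝒱] = fun _ => (1:ℝ) := condExp_const h𝒱 1
      filter_upwards [h, hπ] with ω h1 h2
      have : (μ[fun ω => (1:ℝ) - D ω|𝒱]) ω = (μ[fun _ : Ω => (1:ℝ)|𝒱]) ω - (μ[D|𝒱]) ω := h1
      rw [this, hc1, h2]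
    filter_upwards [hsub, hpull, hμ0, hcD'] with ω h1 h2 h3 h4
    have : (μ[f0|𝒱]) ω = (μ[fun ω => (1 - D ω) * Y ω|𝒱]) ω
        - (μ[fun ω => m0 ω * (1 - D ω)|𝒱]) ω := h1
    rw [this, h2, h3, h4]; ring
  -- Claim A
  have claimA : ∫ ω, g1 ω * f1 ω ∂μ = ∫ ω, (μ1 ω - m1 ω) ∂μ := by
    rw [integral_mul_condexp_aux μ 𝒱 h𝒱 g1 f1 hg1meas ε⁻¹ hg1b hf1int]
    apply integral_congr_ae
    filter_upwards [hcf1, hπpos] with ω h1 h2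
    rw [h1]
    simp only [hg1def]
    field_simp
  -- Claim B
  have claimB : ∫ ω, g0 ω * f0 ω ∂μ = ∫ ω, (μ0 ω - m0 ω) ∂μ := by
    rw [integral_mul_condexp_aux μ 𝒱 h𝒱 g0 f0 hg0meas ε⁻¹ hg0b hf0int]
    apply integral_congr_ae
    filter_upwards [hcf0, h1πpos] with ω h1 h2
    rw [h1]
    simp only [hg0def]
    field_simp
  -- integrability of pieces
  have hgf1int : Integrable (fun ω => g1 ω * f1 ω) μ :=
    hf1int.bdd_mul ((hg1meas.mono h𝒱 le_rfl).stronglyMeasurable).aestronglyMeasurable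
      (by filter_upwards [hg1b] with ω h using h)
  have hgf0int : Integrable (fun ω => g0 ω * f0 ω) μ :=
    hf0int.bdd_mul ((hg0meas.mono h𝒱 le_rfl).stronglyMeasurable).aestronglyMeasurable
      (by filter_upwards [hg0b] with ω h using h)
  -- decompose Λ
  have hΛeq : ∀ ω, Λ ω = (m1 ω - m0 ω) + g1 ω * f1 ω - g0 ω * f0 ω := by
    intro ω
    rw [hΛ ω]
    simp only [hg1def, hg0def, hf1def, hf0def]
    ring
  calc ∫ ω, Λ ω ∂μ
      = ∫ ω, ((m1 ω - m0 ω) + g1 ω * f1 ω - g0 ω * f0 ω) ∂μ := by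
        exact integral_congr_ae (Filter.Eventually.of_forall hΛeq)
    _ = (∫ ω, (m1 ω - m0 ω) ∂μ + ∫ ω, g1 ω * f1 ω ∂μ) - ∫ ω, g0 ω * f0 ω ∂μ := by
        have e1 : ∫ ω, ((m1 ω - m0 ω + g1 ω * f1 ω) - g0 ω * f0 ω) ∂μ
            = ∫ ω, (m1 ω - m0 ω + g1 ω * f1 ω) ∂μ - ∫ ω, g0 ω * f0 ω ∂μ :=
          integral_sub ((hm1int.sub hm0int).add hgf1int) hgf0int
        have e2 : ∫ ω, (m1 ω - m0 ω + g1 ω * f1 ω) ∂μ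
            = ∫ ω, (m1 ω - m0 ω) ∂μ + ∫ ω, g1 ω * f1 ω ∂μ :=
          integral_add (hm1int.sub hm0int) hgf1int
        rw [e1, e2]
    _ = (∫ ω, (m1 ω - m0 ω) ∂μ + ∫ ω, (μ1 ω - m1 ω) ∂μ) - ∫ ω, (μ0 ω - m0 ω) ∂μ := by
        rw [claimA, claimB]
    _ = ∫ ω, (μ1 ω - μ0 ω) ∂μ := by
        have hμ1int : Integrable μ1 μ :=
          (integrable_const C).mono'
            ((hμ1meas.mono h𝒱 le_rfl).stronglyMeasurable).aestronglyMeasurable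
            (Filter.Eventually.of_forall fun ω => by simpa using hμ1bdd ω)
        have hμ0int : Integrable μ0 μ :=
          (integrable_const C).mono'
            ((hμ0meas.mono h𝒱 le_rfl).stronglyMeasurable).aestronglyMeasurable
            (Filter.Eventually.of_forall fun ω => by simpa using hμ0bdd ω)
        rw [integral_sub hm1int hm0int, integral_sub hμ1int hm1int,
          integral_sub hμ0int hm0int, integral_sub hμ1int hμ0int]
        ring
end

section
/- Double robustness of AIPW in the propensity score: if Λ(p) = μ1(V) - μ0(V) + D(Y - μ1(V))/p(V) - (1-D)(Y - μ0(V))/(1-p(V)) uses the true outcome regressions μd(V) = E[Y | D=d, V] but an arbitrary measurable function p of V with ε ≤ p(V) ≤ 1-ε, then E[Λ(p)] = E[μ1(V) - μ0(V)]. -/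
open MeasureTheory

/-- Double robustness of AIPW in the propensity score: with the true
outcome regressions `μ1, μ0` but an arbitrary measurable `p` with `ε ≤ p ≤ 1-ε`,
`E[Λ(p)] = E[μ1(V) - μ0(V)]`. -/
theorem aipw_double_robust_propensity
    {Ω : Type*} (𝒱 : MeasurableSpace Ω) {mΩ : MeasurableSpace Ω} (μ : Measure Ω) [IsProbabilityMeasure μ]
    (h𝒱 : 𝒱 ≤ mΩ)
    (Y D π μ1 μ0 p : Ω → ℝ) (ε : ℝ) (hε : 0 < ε)
    (hY : Integrable Y μ) (hD : ∀ ω, D ω = 0 ∨ D ω = 1)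
    (hDmeas : Measurable D)
    (hπmeas : Measurable[𝒱] π) (hμ1meas : Measurable[𝒱] μ1) (hμ0meas : Measurable[𝒱] μ0)
    (hpmeas : Measurable[𝒱] p)
    (hplb : ∀ ω, ε ≤ p ω) (hpub : ∀ ω, p ω ≤ 1 - ε)
    (C : ℝ) (hμ1bdd : ∀ ω, |μ1 ω| ≤ C) (hμ0bdd : ∀ ω, |μ0 ω| ≤ C)
    (hπ : μ[D | 𝒱] =ᵐ[μ] π)
    (hπlb : ∀ᵐ ω ∂μ, ε ≤ π ω) (hπub : ∀ᵐ ω ∂μ, π ω ≤ 1 - ε)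
    (hμ1 : μ[fun ω => D ω * Y ω | 𝒱] =ᵐ[μ] fun ω => π ω * μ1 ω)
    (hμ0 : μ[fun ω => (1 - D ω) * Y ω | 𝒱] =ᵐ[μ] fun ω => (1 - π ω) * μ0 ω)
    (Λ : Ω → ℝ)
    (hΛ : ∀ ω, Λ ω = μ1 ω - μ0 ω + D ω * (Y ω - μ1 ω) / p ω
          - (1 - D ω) * (Y ω - μ0 ω) / (1 - p ω)) :
    ∫ ω, Λ ω ∂μ = ∫ ω, (μ1 ω - μ0 ω) ∂μ := by
  have hεp : ∀ ω, (0:ℝ) < p ω := fun ω => lt_of_lt_of_le hε (hplb ω)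
  have hε1p : ∀ ω, (0:ℝ) < 1 - p ω := fun ω => by have := hpub ω; linarith
  have hDbd : ∀ ω, ‖D ω‖ ≤ 1 := fun ω => by rcases hD ω with h | h <;> simp [h]
  have h1Dbd : ∀ ω, ‖1 - D ω‖ ≤ 1 := fun ω => by rcases hD ω with h | h <;> simp [h]
  have hDm : Measurable[mΩ] D := hDmeas
  have hμ1m : Measurable[mΩ] μ1 := fun s hs => h𝒱 _ (hμ1meas hs)
  have hμ0m : Measurable[mΩ] μ0 := fun s hs => h𝒱 _ (hμ0meas hs)
  have hμ1norm : ∀ᵐ ω ∂μ, ‖μ1 ω‖ ≤ C :=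
    ae_of_all _ fun ω => by simpa [Real.norm_eq_abs] using hμ1bdd ω
  have hμ0norm : ∀ᵐ ω ∂μ, ‖μ0 ω‖ ≤ C :=
    ae_of_all _ fun ω => by simpa [Real.norm_eq_abs] using hμ0bdd ω
  have hμ1int : Integrable μ1 μ :=
    (integrable_const C).mono' (hμ1m.aestronglyMeasurable : AEStronglyMeasurable[mΩ] μ1 μ) hμ1norm
  have hμ0int : Integrable μ0 μ :=
    (integrable_const C).mono' (hμ0m.aestronglyMeasurable : AEStronglyMeasurable[mΩ] μ0 μ) hμ0norm
  have hDint : Integrable D μ :=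
    (integrable_const (1:ℝ)).mono' (hDm.aestronglyMeasurable : AEStronglyMeasurable[mΩ] D μ) (ae_of_all _ hDbd)
  have h1Dint : Integrable (fun ω => 1 - D ω) μ := (integrable_const 1).sub hDint
  have hDY : Integrable (fun ω => D ω * Y ω) μ :=
    hY.bdd_mul (hDm.aestronglyMeasurable : AEStronglyMeasurable[mΩ] D μ) (ae_of_all _ hDbd)
  have h1DY : Integrable (fun ω => (1 - D ω) * Y ω) μ :=
    hY.bdd_mul ((measurable_const.sub hDm).aestronglyMeasurable : AEStronglyMeasurable[mΩ] (fun ω => 1 - D ω) μ) (ae_of_all _ h1Dbd)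
  have hμ1D : Integrable (fun ω => μ1 ω * D ω) μ := hDint.bdd_mul (hμ1m.aestronglyMeasurable : AEStronglyMeasurable[mΩ] μ1 μ) hμ1norm
  have hμ01D : Integrable (fun ω => μ0 ω * (1 - D ω)) μ :=
    h1Dint.bdd_mul (hμ0m.aestronglyMeasurable : AEStronglyMeasurable[mΩ] μ0 μ) hμ0norm
  -- the two correction terms
  set g1 : Ω → ℝ := fun ω => D ω * (Y ω - μ1 ω) with hg1def
  set g0 : Ω → ℝ := fun ω => (1 - D ω) * (Y ω - μ0 ω) with hg0def
  have hg1int : Integrable g1 μ :=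
    (hDY.sub hμ1D).congr (ae_of_all _ fun ω => by simp [hg1def]; ring)
  have hg0int : Integrable g0 μ :=
    (h1DY.sub hμ01D).congr (ae_of_all _ fun ω => by simp [hg0def]; ring)
  set f1 : Ω → ℝ := fun ω => (p ω)⁻¹ with hf1def
  set f0 : Ω → ℝ := fun ω => (1 - p ω)⁻¹ with hf0def
  have hf1sm : StronglyMeasurable[𝒱] f1 := hpmeas.inv.stronglyMeasurable
  have hf0sm : StronglyMeasurable[𝒱] f0 := (measurable_const.sub hpmeas).inv.stronglyMeasurable
  have hf1bd : ∀ᵐ ω ∂μ, ‖f1 ω‖ ≤ ε⁻¹ := ae_of_all _ fun ω => by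
    rw [Real.norm_eq_abs, abs_of_pos (inv_pos.2 (hεp ω))]
    exact inv_anti₀ hε (hplb ω)
  have hf0bd : ∀ᵐ ω ∂μ, ‖f0 ω‖ ≤ ε⁻¹ := ae_of_all _ fun ω => by
    rw [Real.norm_eq_abs, abs_of_pos (inv_pos.2 (hε1p ω))]
    refine inv_anti₀ hε ?_
    have := hpub ω; linarith
  have hf1g1 : Integrable (f1 * g1) μ :=
    hg1int.bdd_mul ((hf1sm.mono h𝒱).aestronglyMeasurable) hf1bd
  have hf0g0 : Integrable (f0 * g0) μ :=
    hg0int.bdd_mul ((hf0sm.mono h𝒱).aestronglyMeasurable) hf0bd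
  -- conditional expectations of g1 and g0 vanish
  have hceg1 : μ[g1 | 𝒱] =ᵐ[μ] 0 := by
    have h1 : μ[fun ω => μ1 ω * D ω | 𝒱] =ᵐ[μ] fun ω => μ1 ω * (μ[D | 𝒱]) ω :=
      condExp_stronglyMeasurable_mul_of_bound h𝒱 hμ1meas.stronglyMeasurable hDint C hμ1norm
    have hsub : μ[g1 | 𝒱] =ᵐ[μ]
        μ[fun ω => D ω * Y ω | 𝒱] - μ[fun ω => μ1 ω * D ω | 𝒱] := by
      have : g1 = (fun ω => D ω * Y ω) - fun ω => μ1 ω * D ω := by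
        funext ω; simp [hg1def]; ring
      rw [this]; exact condExp_sub hDY hμ1D 𝒱
    filter_upwards [hsub, hμ1, h1, hπ] with ω h₁ h₂ h₃ h₄
    simp only [Pi.sub_apply, Pi.zero_apply] at *
    rw [h₁, h₂, h₃, h₄]; ring
  have hceg0 : μ[g0 | 𝒱] =ᵐ[μ] 0 := by
    have h1 : μ[fun ω => μ0 ω * (1 - D ω) | 𝒱] =ᵐ[μ] fun ω => μ0 ω * (μ[fun ω => 1 - D ω | 𝒱]) ω :=
      condExp_stronglyMeasurable_mul_of_bound h𝒱 hμ0meas.stronglyMeasurable h1Dint C hμ0norm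
    have h1D : μ[fun ω => 1 - D ω | 𝒱] =ᵐ[μ] fun ω => 1 - π ω := by
      have hs : μ[fun ω => 1 - D ω | 𝒱] =ᵐ[μ] μ[fun _ => (1:ℝ) | 𝒱] - μ[D | 𝒱] :=
        condExp_sub (integrable_const 1) hDint 𝒱
      filter_upwards [hs, hπ] with ω h₁ h₂
      simp only [Pi.sub_apply] at *
      rw [h₁, h₂, condExp_const (μ := μ) h𝒱 (1:ℝ)]
    have hsub : μ[g0 | 𝒱] =ᵐ[μ]
        μ[fun ω => (1 - D ω) * Y ω | 𝒱] - μ[fun ω => μ0 ω * (1 - D ω) | 𝒱] := by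
      have : g0 = (fun ω => (1 - D ω) * Y ω) - fun ω => μ0 ω * (1 - D ω) := by
        funext ω; simp [hg0def]; ring
      rw [this]; exact condExp_sub h1DY hμ01D 𝒱
    filter_upwards [hsub, hμ0, h1, h1D] with ω h₁ h₂ h₃ h₄
    simp only [Pi.sub_apply, Pi.zero_apply] at *
    rw [h₁, h₂, h₃, h₄]; ring
  -- hence the two correction terms integrate to zero
  have hint1 : ∫ ω, (f1 * g1) ω ∂μ = 0 := by
    rw [← integral_condExp (f := f1 * g1) h𝒱]
    have hmul : μ[f1 * g1 | 𝒱] =ᵐ[μ] f1 * μ[g1 | 𝒱] :=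
      condExp_stronglyMeasurable_mul_of_bound h𝒱 hf1sm hg1int ε⁻¹ hf1bd
    have : μ[f1 * g1 | 𝒱] =ᵐ[μ] 0 := by
      filter_upwards [hmul, hceg1] with ω h₁ h₂
      simp only [Pi.mul_apply, Pi.zero_apply] at *
      rw [h₁, h₂]; ring
    rw [integral_congr_ae this]; simp
  have hint0 : ∫ ω, (f0 * g0) ω ∂μ = 0 := by
    rw [← integral_condExp (f := f0 * g0) h𝒱]
    have hmul : μ[f0 * g0 | 𝒱] =ᵐ[μ] f0 * μ[g0 | 𝒱] :=
      condExp_stronglyMeasurable_mul_of_bound h𝒱 hf0sm hg0int ε⁻¹ hf0bd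
    have : μ[f0 * g0 | 𝒱] =ᵐ[μ] 0 := by
      filter_upwards [hmul, hceg0] with ω h₁ h₂
      simp only [Pi.mul_apply, Pi.zero_apply] at *
      rw [h₁, h₂]; ring
    rw [integral_congr_ae this]; simp
  -- put things together
  have hΛeq : Λ = fun ω => (μ1 ω - μ0 ω) + (f1 * g1) ω - (f0 * g0) ω := by
    funext ω
    rw [hΛ ω]
    simp only [Pi.mul_apply, hf1def, hf0def, hg1def, hg0def]
    rw [div_eq_mul_inv, div_eq_mul_inv]
    ring
  have hB : Integrable (fun ω => μ1 ω - μ0 ω) μ := hμ1int.sub hμ0int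
  have hA : Integrable (fun ω => μ1 ω - μ0 ω + (f1 * g1) ω) μ := hB.add hf1g1
  have key : ∫ ω, Λ ω ∂μ
      = ∫ ω, (μ1 ω - μ0 ω + (f1 * g1) ω - (f0 * g0) ω) ∂μ :=
    integral_congr_ae (ae_of_all _ fun ω => by rw [hΛeq])
  rw [key, integral_sub hA hf0g0, integral_add hB hf1g1, hint1, hint0]
  ring
end

section
/- Neyman orthogonality of the AIPW score with respect to the propensity score: define f(t) = E[μ1(V) - μ0(V) + D(Y - μ1(V))/π_t(V) - (1-D)(Y - μ0(V))/(1 - π_t(V))] where π_t = π + t·h for a bounded measurable perturbation h of V, with π the true propensity score and μ1, μ0 the true outcome regressions. Then f is differentiable at t = 0 and f'(0) = 0. -/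
open MeasureTheory

private lemma aipw_deriv_aux {α : Type*} {mα : MeasurableSpace α} (μ : Measure α)
    [IsFiniteMeasure μ] (F F' : ℝ → α → ℝ) (δ' B : ℝ) (hδ'0 : 0 < δ')
    (hmeas : ∀ t, AEStronglyMeasurable (F t) μ) (hint : Integrable (F 0) μ)
    (h'meas : AEStronglyMeasurable (F' 0) μ)
    (hbound : ∀ᵐ a ∂μ, ∀ x ∈ Metric.ball (0:ℝ) δ', ‖F' x a‖ ≤ B)
    (hdiff : ∀ᵐ a ∂μ, ∀ x ∈ Metric.ball (0:ℝ) δ', HasDerivAt (F · a) (F' x a) x) :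
    HasDerivAt (fun t => ∫ a, F t a ∂μ) (∫ a, F' 0 a ∂μ) 0 :=
  (hasDerivAt_integral_of_dominated_loc_of_deriv_le (Metric.ball_mem_nhds 0 hδ'0) (.of_forall hmeas) hint h'meas
    hbound (integrable_const B) hdiff).2

/-- Neyman orthogonality of the AIPW score in the propensity score:
with `π_t = π + t·h`, the map `f(t) = E[Λ(π_t)]` is differentiable at `0` with
derivative `0`. -/
theorem aipw_neyman_orthogonal_propensity
    {Ω : Type*} (𝒱 : MeasurableSpace Ω) {mΩ : MeasurableSpace Ω} (μ : Measure Ω) [IsProbabilityMeasure μ]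
    (h𝒱 : 𝒱 ≤ mΩ)
    (Y D π μ1 μ0 h : Ω → ℝ) (ε : ℝ) (hε : 0 < ε)
    (CY : ℝ) (hYbdd : ∀ ω, |Y ω| ≤ CY) (hYmeas : Measurable Y)
    (hD : ∀ ω, D ω = 0 ∨ D ω = 1) (hDmeas : Measurable D)
    (hπmeas : Measurable[𝒱] π) (hμ1meas : Measurable[𝒱] μ1) (hμ0meas : Measurable[𝒱] μ0)
    (hhmeas : Measurable[𝒱] h) (Ch : ℝ) (hhbdd : ∀ ω, |h ω| ≤ Ch)
    (hπ : μ[D | 𝒱] =ᵐ[μ] π)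
    (hπlb : ∀ᵐ ω ∂μ, ε ≤ π ω) (hπub : ∀ᵐ ω ∂μ, π ω ≤ 1 - ε)
    (hμ1 : μ[fun ω => D ω * Y ω | 𝒱] =ᵐ[μ] fun ω => π ω * μ1 ω)
    (hμ0 : μ[fun ω => (1 - D ω) * Y ω | 𝒱] =ᵐ[μ] fun ω => (1 - π ω) * μ0 ω)
    (δ : ℝ) (hδ : 0 < δ)
    (hstay : ∀ t : ℝ, |t| < δ →
      ∀ᵐ ω ∂μ, ε / 2 ≤ π ω + t * h ω ∧ π ω + t * h ω ≤ 1 - ε / 2)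
    (f : ℝ → ℝ)
    (hf : ∀ t : ℝ, f t =
      ∫ ω, (μ1 ω - μ0 ω + D ω * (Y ω - μ1 ω) / (π ω + t * h ω)
        - (1 - D ω) * (Y ω - μ0 ω) / (1 - (π ω + t * h ω))) ∂μ) :
    HasDerivAt f 0 0 := by
  classical
  -- basic setup
  have hne : Nonempty Ω := by
    by_contra hc
    rw [not_nonempty_iff] at hc
    have h1 : μ Set.univ = 1 := measure_univ
    rw [Set.univ_eq_empty_iff.mpr hc, measure_empty] at h1
    exact one_ne_zero h1.symm
  have hCY0 : 0 ≤ CY := le_trans (abs_nonneg _) (hYbdd (Classical.arbitrary Ω))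
  set Cm : ℝ := max Ch 1 with hCm_def
  have hCm1 : (1:ℝ) ≤ Cm := le_max_right _ _
  have hCm0 : 0 < Cm := lt_of_lt_of_le one_pos hCm1
  have hhCm : ∀ ω, |h ω| ≤ Cm := fun ω => le_trans (hhbdd ω) (le_max_left _ _)
  set δ' : ℝ := ε / (2 * Cm) with hδ'_def
  have hδ'0 : 0 < δ' := by positivity
  have hYm : Measurable[mΩ] Y := hYmeas
  have hDm : Measurable[mΩ] D := hDmeas
  have hπm : Measurable[mΩ] π := fun s hs => h𝒱 _ (hπmeas hs)
  have hμ1m : Measurable[mΩ] μ1 := fun s hs => h𝒱 _ (hμ1meas hs)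
  have hμ0m : Measurable[mΩ] μ0 := fun s hs => h𝒱 _ (hμ0meas hs)
  have hhm : Measurable[mΩ] h := fun s hs => h𝒱 _ (hhmeas hs)
  have hDabs : ∀ ω, |D ω| ≤ 1 := by
    intro ω; rcases hD ω with h0 | h0 <;> simp [h0]
  have hDabs' : ∀ ω, |1 - D ω| ≤ 1 := by
    intro ω; rcases hD ω with h0 | h0 <;> simp [h0]
  -- integrability of a.e.-bounded measurable functions
  have int_of_bdd : ∀ (g : Ω → ℝ) (C : ℝ), Measurable[mΩ] g → (∀ᵐ ω ∂μ, |g ω| ≤ C) →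
      Integrable g μ := by
    intro g C hg hb
    refine (integrable_const C).mono' hg.aestronglyMeasurable ?_
    simpa [Real.norm_eq_abs] using hb
  -- sigma-finiteness of trim
  haveI : SigmaFinite (μ.trim h𝒱) := (isFiniteMeasure_trim h𝒱).toSigmaFinite
  -- a.e. bounds on μ1, μ0
  have hDY_int : Integrable (fun ω => D ω * Y ω) μ := by
    refine int_of_bdd _ CY (hDm.mul hYm) (ae_of_all _ fun ω => ?_)
    calc |D ω * Y ω| = |D ω| * |Y ω| := abs_mul _ _
      _ ≤ 1 * CY := mul_le_mul (hDabs ω) (hYbdd ω) (abs_nonneg _) one_pos.le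
      _ = CY := one_mul _
  have hDY_int' : Integrable (fun ω => (1 - D ω) * Y ω) μ := by
    refine int_of_bdd _ CY ((measurable_const.sub hDm).mul hYm) (ae_of_all _ fun ω => ?_)
    calc |(1 - D ω) * Y ω| = |1 - D ω| * |Y ω| := abs_mul _ _
      _ ≤ 1 * CY := mul_le_mul (hDabs' ω) (hYbdd ω) (abs_nonneg _) one_pos.le
      _ = CY := one_mul _
  have hbμ1 : ∀ᵐ ω ∂μ, |μ1 ω| ≤ CY / ε := by
    have hub := condExp_mono (m := 𝒱) hDY_int (integrable_const CY)
      (ae_of_all _ fun ω => by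
        calc D ω * Y ω ≤ |D ω * Y ω| := le_abs_self _
          _ ≤ CY := by
            rw [abs_mul]
            calc |D ω| * |Y ω| ≤ 1 * CY :=
              mul_le_mul (hDabs ω) (hYbdd ω) (abs_nonneg _) one_pos.le
              _ = CY := one_mul _)
    have hlb := condExp_mono (m := 𝒱) (integrable_const (-CY)) hDY_int
      (ae_of_all _ fun ω => by
        have : |D ω * Y ω| ≤ CY := by
          rw [abs_mul]
          calc |D ω| * |Y ω| ≤ 1 * CY :=
            mul_le_mul (hDabs ω) (hYbdd ω) (abs_nonneg _) one_pos.le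
            _ = CY := one_mul _
        simpa using (abs_le.mp this).1)
    rw [condExp_const h𝒱] at hub hlb
    filter_upwards [hub, hlb, hμ1, hπlb] with ω h1 h2 h3 h4
    rw [h3] at h1 h2
    have hπpos : 0 < π ω := lt_of_lt_of_le hε h4
    have habs : π ω * |μ1 ω| ≤ CY := by
      rw [← abs_of_pos hπpos, ← abs_mul]
      exact abs_le.mpr ⟨h2, h1⟩
    rw [le_div_iff₀ hε]
    nlinarith [abs_nonneg (μ1 ω)]
  have hbμ0 : ∀ᵐ ω ∂μ, |μ0 ω| ≤ CY / ε := by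
    have hub := condExp_mono (m := 𝒱) hDY_int' (integrable_const CY)
      (ae_of_all _ fun ω => by
        calc (1 - D ω) * Y ω ≤ |(1 - D ω) * Y ω| := le_abs_self _
          _ ≤ CY := by
            rw [abs_mul]
            calc |1 - D ω| * |Y ω| ≤ 1 * CY :=
              mul_le_mul (hDabs' ω) (hYbdd ω) (abs_nonneg _) one_pos.le
              _ = CY := one_mul _)
    have hlb := condExp_mono (m := 𝒱) (integrable_const (-CY)) hDY_int'
      (ae_of_all _ fun ω => by
        have : |(1 - D ω) * Y ω| ≤ CY := by
          rw [abs_mul]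
          calc |1 - D ω| * |Y ω| ≤ 1 * CY :=
            mul_le_mul (hDabs' ω) (hYbdd ω) (abs_nonneg _) one_pos.le
            _ = CY := one_mul _
        simpa using (abs_le.mp this).1)
    rw [condExp_const h𝒱] at hub hlb
    filter_upwards [hub, hlb, hμ0, hπub] with ω h1 h2 h3 h4
    rw [h3] at h1 h2
    have hπpos : 0 < 1 - π ω := by linarith
    have hεle : ε ≤ 1 - π ω := by linarith
    have habs : (1 - π ω) * |μ0 ω| ≤ CY := by
      rw [← abs_of_pos hπpos, ← abs_mul]
      exact abs_le.mpr ⟨h2, h1⟩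
    rw [le_div_iff₀ hε]
    nlinarith [abs_nonneg (μ0 ω)]
  -- quotient bound helper
  have hquot : ∀ (x p N c : ℝ), 0 ≤ N → |x| ≤ N → 0 < c → c ≤ p → |x / p| ≤ N / c := by
    intro x p N c hN hx hc hp
    rw [abs_div, abs_of_pos (lt_of_lt_of_le hc hp)]
    exact div_le_div₀ hN hx hc hp
  set N : ℝ := CY + CY / ε with hN_def
  have hN0 : 0 ≤ N := by positivity
  -- the parametrized integrand and its t-derivative
  set F : ℝ → Ω → ℝ := fun t ω =>
    μ1 ω - μ0 ω + D ω * (Y ω - μ1 ω) / (π ω + t * h ω)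
      - (1 - D ω) * (Y ω - μ0 ω) / (1 - (π ω + t * h ω)) with hF_def
  set F' : ℝ → Ω → ℝ := fun t ω =>
    -(D ω * (Y ω - μ1 ω) * h ω) / (π ω + t * h ω) ^ 2
      - (1 - D ω) * (Y ω - μ0 ω) * h ω / (1 - (π ω + t * h ω)) ^ 2 with hF'_def
  have hFmeas : ∀ t, Measurable[mΩ] (F t) := by
    intro t
    exact ((hμ1m.sub hμ0m).add
        ((hDm.mul (hYm.sub hμ1m)).div (hπm.add (hhm.const_mul t)))).sub
      (((measurable_const.sub hDm).mul (hYm.sub hμ0m)).div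
        (measurable_const.sub (hπm.add (hhm.const_mul t))))
  have hF'meas : ∀ t, Measurable[mΩ] (F' t) := by
    intro t
    exact ((((hDm.mul (hYm.sub hμ1m)).mul hhm).neg.div
        ((hπm.add (hhm.const_mul t)).pow_const 2))).sub
      ((((measurable_const.sub hDm).mul (hYm.sub hμ0m)).mul hhm).div
        ((measurable_const.sub (hπm.add (hhm.const_mul t))).pow_const 2))
  -- numerator bounds (pointwise given bounds on μ1 μ0)
  have hnum1 : ∀ ω, |μ1 ω| ≤ CY / ε → |D ω * (Y ω - μ1 ω)| ≤ N := by
    intro ω hb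
    have h1 : |Y ω - μ1 ω| ≤ N := by
      calc |Y ω - μ1 ω| ≤ |Y ω| + |μ1 ω| := abs_sub _ _
        _ ≤ CY + CY / ε := add_le_add (hYbdd ω) hb
    calc |D ω * (Y ω - μ1 ω)| = |D ω| * |Y ω - μ1 ω| := abs_mul _ _
      _ ≤ 1 * N := mul_le_mul (hDabs ω) h1 (abs_nonneg _) one_pos.le
      _ = N := one_mul _
  have hnum0 : ∀ ω, |μ0 ω| ≤ CY / ε → |(1 - D ω) * (Y ω - μ0 ω)| ≤ N := by
    intro ω hb
    have h1 : |Y ω - μ0 ω| ≤ N := by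
      calc |Y ω - μ0 ω| ≤ |Y ω| + |μ0 ω| := abs_sub _ _
        _ ≤ CY + CY / ε := add_le_add (hYbdd ω) hb
    calc |(1 - D ω) * (Y ω - μ0 ω)| = |1 - D ω| * |Y ω - μ0 ω| := abs_mul _ _
      _ ≤ 1 * N := mul_le_mul (hDabs' ω) h1 (abs_nonneg _) one_pos.le
      _ = N := one_mul _
  -- the a.e. good set statement: for all t in the ball, denominators are ≥ ε/2
  have hgood : ∀ᵐ ω ∂μ, (∀ t ∈ Metric.ball (0:ℝ) δ',
      ε / 2 ≤ π ω + t * h ω ∧ π ω + t * h ω ≤ 1 - ε / 2) ∧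
      |μ1 ω| ≤ CY / ε ∧ |μ0 ω| ≤ CY / ε := by
    filter_upwards [hπlb, hπub, hbμ1, hbμ0] with ω h1 h2 h3 h4
    refine ⟨fun t ht => ?_, h3, h4⟩
    rw [Metric.mem_ball, dist_zero_right, Real.norm_eq_abs] at ht
    have hth : |t * h ω| ≤ ε / 2 := by
      calc |t * h ω| = |t| * |h ω| := abs_mul _ _
        _ ≤ δ' * Cm := mul_le_mul ht.le (hhCm ω) (abs_nonneg _) hδ'0.le
        _ = ε / 2 := by rw [hδ'_def]; field_simp [hCm0.ne']
    have := abs_le.mp hth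
    constructor <;> linarith [this.1, this.2]
  -- differentiation under the integral sign
  set B : ℝ := N * Cm / (ε / 2) ^ 2 + N * Cm / (ε / 2) ^ 2 with hB_def
  have hε2 : (0:ℝ) < (ε / 2) ^ 2 := by positivity
  have hkey := aipw_deriv_aux μ F F' δ' B hδ'0
    (fun t => (hFmeas t).aestronglyMeasurable)
    ?hFint ((hF'meas 0).aestronglyMeasurable) ?hbound ?hdiff
  case hbound =>
    filter_upwards [hgood] with ω hω t ht
    obtain ⟨hball, hb1, hb0⟩ := hω
    obtain ⟨hd1, hd2⟩ := hball t ht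
    have hd1sq : (ε / 2) ^ 2 ≤ (π ω + t * h ω) ^ 2 := by
      apply pow_le_pow_left₀ (by positivity) hd1
    have hd2sq : (ε / 2) ^ 2 ≤ (1 - (π ω + t * h ω)) ^ 2 := by
      apply pow_le_pow_left₀ (by positivity)
      linarith
    have ha : |(-(D ω * (Y ω - μ1 ω) * h ω)) / (π ω + t * h ω) ^ 2| ≤ N * Cm / (ε / 2) ^ 2 := by
      apply hquot _ _ _ _ (by positivity) ?_ hε2 hd1sq
      rw [abs_neg, abs_mul]
      exact mul_le_mul (hnum1 ω hb1) (hhCm ω) (abs_nonneg _) hN0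
    have hb : |(1 - D ω) * (Y ω - μ0 ω) * h ω / (1 - (π ω + t * h ω)) ^ 2| ≤
        N * Cm / (ε / 2) ^ 2 := by
      apply hquot _ _ _ _ (by positivity) ?_ hε2 hd2sq
      rw [abs_mul]
      exact mul_le_mul (hnum0 ω hb0) (hhCm ω) (abs_nonneg _) hN0
    rw [Real.norm_eq_abs]
    calc |F' t ω| ≤ |(-(D ω * (Y ω - μ1 ω) * h ω)) / (π ω + t * h ω) ^ 2| +
        |(1 - D ω) * (Y ω - μ0 ω) * h ω / (1 - (π ω + t * h ω)) ^ 2| := abs_sub _ _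
      _ ≤ B := add_le_add ha hb
  case hFint =>
    refine int_of_bdd _ (CY / ε + CY / ε + N / (ε / 2) + N / (ε / 2)) (hFmeas 0) ?_
    filter_upwards [hgood] with ω hω
    obtain ⟨hball, hb1, hb0⟩ := hω
    obtain ⟨hd1, hd2⟩ := hball 0 (Metric.mem_ball_self hδ'0)
    have ha : |D ω * (Y ω - μ1 ω) / (π ω + 0 * h ω)| ≤ N / (ε / 2) :=
      hquot _ _ _ _ hN0 (hnum1 ω hb1) (by positivity) hd1
    have hb : |(1 - D ω) * (Y ω - μ0 ω) / (1 - (π ω + 0 * h ω))| ≤ N / (ε / 2) :=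
      hquot _ _ _ _ hN0 (hnum0 ω hb0) (by positivity) (by linarith)
    calc |F 0 ω| ≤ |μ1 ω - μ0 ω + D ω * (Y ω - μ1 ω) / (π ω + 0 * h ω)| +
        |(1 - D ω) * (Y ω - μ0 ω) / (1 - (π ω + 0 * h ω))| := abs_sub _ _
      _ ≤ (|μ1 ω - μ0 ω| + |D ω * (Y ω - μ1 ω) / (π ω + 0 * h ω)|) +
        |(1 - D ω) * (Y ω - μ0 ω) / (1 - (π ω + 0 * h ω))| :=
          add_le_add_left (abs_add_le _ _) _
      _ ≤ (|μ1 ω| + |μ0 ω| + |D ω * (Y ω - μ1 ω) / (π ω + 0 * h ω)|) +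
        |(1 - D ω) * (Y ω - μ0 ω) / (1 - (π ω + 0 * h ω))| := by
          gcongr; exact abs_sub _ _
      _ ≤ CY / ε + CY / ε + N / (ε / 2) + N / (ε / 2) := by
          have := add_le_add (add_le_add (add_le_add hb1 hb0) ha) hb
          linarith
  case hdiff =>
    filter_upwards [hgood] with ω hω t ht
    obtain ⟨hball, _, _⟩ := hω
    obtain ⟨hd1, hd2⟩ := hball t ht
    have hd1ne : π ω + t * h ω ≠ 0 := ne_of_gt (lt_of_lt_of_le (by positivity) hd1)
    have hd2ne : 1 - (π ω + t * h ω) ≠ 0 := by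
      have : (0:ℝ) < 1 - (π ω + t * h ω) := by linarith
      exact ne_of_gt this
    have h1 : HasDerivAt (fun s : ℝ => π ω + s * h ω) (h ω) t := by
      simpa using ((hasDerivAt_id t).mul_const (h ω)).const_add (π ω)
    have h2 := (hasDerivAt_const t (D ω * (Y ω - μ1 ω))).div h1 hd1ne
    have h3 := (hasDerivAt_const t ((1 - D ω) * (Y ω - μ0 ω))).div (h1.const_sub 1) hd2ne
    have h4 := (h2.const_add (μ1 ω - μ0 ω)).sub h3
    have heq : F' t ω = (0 * (π ω + t * h ω) - D ω * (Y ω - μ1 ω) * h ω) / (π ω + t * h ω) ^ 2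
        - (0 * (1 - (π ω + t * h ω)) - (1 - D ω) * (Y ω - μ0 ω) * -h ω) /
          (1 - (π ω + t * h ω)) ^ 2 := by
      simp only [hF'_def]
      ring
    rw [heq]
    exact h4
  -- identify f with the parametric integral
  have hfeq : f = fun t => ∫ ω, F t ω ∂μ := by
    funext t; rw [hf t]
  -- the derivative integral is zero
  -- zero-mean scores conditionally on 𝒱
  have hDint : Integrable D μ := int_of_bdd _ 1 hDm (ae_of_all _ hDabs)
  have hμ1int : Integrable μ1 μ := int_of_bdd _ (CY / ε) hμ1m hbμ1
  have hμ0int : Integrable μ0 μ := int_of_bdd _ (CY / ε) hμ0m hbμ0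
  have hμ1Dint : Integrable (μ1 * D) μ := by
    refine int_of_bdd _ (CY / ε) (hμ1m.mul hDm) ?_
    filter_upwards [hbμ1] with ω hb
    calc |(μ1 * D) ω| = |μ1 ω| * |D ω| := abs_mul _ _
      _ ≤ CY / ε * 1 := mul_le_mul hb (hDabs ω) (abs_nonneg _) (by positivity)
      _ = CY / ε := mul_one _
  have hμ0Dint : Integrable (μ0 * fun ω => 1 - D ω) μ := by
    refine int_of_bdd _ (CY / ε) (hμ0m.mul (measurable_const.sub hDm)) ?_
    filter_upwards [hbμ0] with ω hb
    calc |(μ0 * fun ω => 1 - D ω) ω| = |μ0 ω| * |1 - D ω| := abs_mul _ _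
      _ ≤ CY / ε * 1 := mul_le_mul hb (hDabs' ω) (abs_nonneg _) (by positivity)
      _ = CY / ε := mul_one _
  have hX1int : Integrable (fun ω => D ω * (Y ω - μ1 ω)) μ := by
    refine int_of_bdd _ N (hDm.mul (hYm.sub hμ1m)) ?_
    filter_upwards [hbμ1] with ω hb
    exact hnum1 ω hb
  have hX0int : Integrable (fun ω => (1 - D ω) * (Y ω - μ0 ω)) μ := by
    refine int_of_bdd _ N ((measurable_const.sub hDm).mul (hYm.sub hμ0m)) ?_
    filter_upwards [hbμ0] with ω hb
    exact hnum0 ω hb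
  -- conditional mean zero for X1
  have hc1 : μ[fun ω => D ω * (Y ω - μ1 ω) | 𝒱] =ᵐ[μ] 0 := by
    have he : (fun ω => D ω * (Y ω - μ1 ω)) = (fun ω => D ω * Y ω) - μ1 * D := by
      funext ω; simp [Pi.mul_apply]; ring
    rw [he]
    have hsub := condExp_sub (m := 𝒱) hDY_int hμ1Dint
    have hpull := condExp_mul_of_stronglyMeasurable_left (m := 𝒱) hμ1meas.stronglyMeasurable
      hμ1Dint hDint
    filter_upwards [hsub, hpull, hμ1, hπ] with ω h1 h2 h3 h4
    simp only [Pi.sub_apply, Pi.mul_apply, Pi.zero_apply] at *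
    rw [h1, h2, h3, h4]
    ring
  have hc0 : μ[fun ω => (1 - D ω) * (Y ω - μ0 ω) | 𝒱] =ᵐ[μ] 0 := by
    have he : (fun ω => (1 - D ω) * (Y ω - μ0 ω)) =
        (fun ω => (1 - D ω) * Y ω) - μ0 * fun ω => 1 - D ω := by
      funext ω; simp [Pi.mul_apply]; ring
    rw [he]
    have hsub := condExp_sub (m := 𝒱) hDY_int' hμ0Dint
    have hDint' : Integrable (fun ω => 1 - D ω) μ :=
      int_of_bdd _ 1 (measurable_const.sub hDm) (ae_of_all _ hDabs')
    have hpull := condExp_mul_of_stronglyMeasurable_left (m := 𝒱) hμ0meas.stronglyMeasurable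
      hμ0Dint hDint'
    have hcD : μ[fun ω => 1 - D ω | 𝒱] =ᵐ[μ] fun ω => 1 - π ω := by
      have hsub' := condExp_sub (m := 𝒱) (integrable_const (1:ℝ)) hDint
      have : (fun ω => 1 - D ω) = (fun _ : Ω => (1:ℝ)) - D := by funext ω; simp
      rw [this]
      refine hsub'.trans ?_
      filter_upwards [hπ] with ω h4
      simp [condExp_const h𝒱, h4]
    filter_upwards [hsub, hpull, hμ0, hcD] with ω h1 h2 h3 h4
    simp only [Pi.sub_apply, Pi.mul_apply, Pi.zero_apply] at *
    rw [h1, h2, h3, h4]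
    ring
  -- generic vanishing of ∫ g · X when g is 𝒱-measurable and μ[X|𝒱] = 0
  have hzero : ∀ (g X : Ω → ℝ), StronglyMeasurable[𝒱] g → Integrable (g * X) μ →
      Integrable X μ → μ[X | 𝒱] =ᵐ[μ] 0 → ∫ ω, g ω * X ω ∂μ = 0 := by
    intro g X hg hgX hX hcz
    have hpull := condExp_mul_of_stronglyMeasurable_left (m := 𝒱) hg hgX hX
    calc ∫ ω, g ω * X ω ∂μ = ∫ ω, (g * X) ω ∂μ := rfl
      _ = ∫ ω, (μ[g * X | 𝒱]) ω ∂μ := (integral_condExp h𝒱).symm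
      _ = ∫ ω, (0:ℝ) ∂μ := by
          refine integral_congr_ae ?_
          filter_upwards [hpull, hcz] with ω h1 h2
          simp only [Pi.mul_apply, Pi.zero_apply] at *
          rw [h1, h2, mul_zero]
      _ = 0 := integral_zero _ _
  -- assemble: the derivative integral is 0
  set g1 : Ω → ℝ := fun ω => h ω / π ω ^ 2 with hg1_def
  set g0 : Ω → ℝ := fun ω => h ω / (1 - π ω) ^ 2 with hg0_def
  have hg1sm : StronglyMeasurable[𝒱] g1 :=
    (hhmeas.div (hπmeas.pow_const 2)).stronglyMeasurable
  have hg0sm : StronglyMeasurable[𝒱] g0 :=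
    (hhmeas.div ((measurable_const.sub hπmeas).pow_const 2)).stronglyMeasurable
  have hg1b : ∀ᵐ ω ∂μ, |g1 ω| ≤ Cm / ε ^ 2 := by
    filter_upwards [hπlb] with ω h1
    have : ε ^ 2 ≤ π ω ^ 2 := pow_le_pow_left₀ hε.le h1 2
    exact hquot _ _ _ _ hCm0.le (hhCm ω) (by positivity) this
  have hg0b : ∀ᵐ ω ∂μ, |g0 ω| ≤ Cm / ε ^ 2 := by
    filter_upwards [hπub] with ω h1
    have h2 : ε ≤ 1 - π ω := by linarith
    have : ε ^ 2 ≤ (1 - π ω) ^ 2 := pow_le_pow_left₀ hε.le h2 2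
    exact hquot _ _ _ _ hCm0.le (hhCm ω) (by positivity) this
  have hg1X1int : Integrable (g1 * fun ω => D ω * (Y ω - μ1 ω)) μ := by
    refine int_of_bdd _ (Cm / ε ^ 2 * N)
      (((hhm.div (hπm.pow_const 2))).mul (hDm.mul (hYm.sub hμ1m))) ?_
    filter_upwards [hg1b, hbμ1] with ω h1 h2
    calc |(g1 * fun ω => D ω * (Y ω - μ1 ω)) ω| = |g1 ω| * |D ω * (Y ω - μ1 ω)| :=
        abs_mul _ _
      _ ≤ Cm / ε ^ 2 * N := mul_le_mul h1 (hnum1 ω h2) (abs_nonneg _) (by positivity)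
  have hg0X0int : Integrable (g0 * fun ω => (1 - D ω) * (Y ω - μ0 ω)) μ := by
    refine int_of_bdd _ (Cm / ε ^ 2 * N)
      (((hhm.div ((measurable_const.sub hπm).pow_const 2))).mul
        ((measurable_const.sub hDm).mul (hYm.sub hμ0m))) ?_
    filter_upwards [hg0b, hbμ0] with ω h1 h2
    calc |(g0 * fun ω => (1 - D ω) * (Y ω - μ0 ω)) ω| =
        |g0 ω| * |(1 - D ω) * (Y ω - μ0 ω)| := abs_mul _ _
      _ ≤ Cm / ε ^ 2 * N := mul_le_mul h1 (hnum0 ω h2) (abs_nonneg _) (by positivity)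
  have hz1 : ∫ ω, g1 ω * (D ω * (Y ω - μ1 ω)) ∂μ = 0 :=
    hzero g1 _ hg1sm hg1X1int hX1int hc1
  have hz0 : ∫ ω, g0 ω * ((1 - D ω) * (Y ω - μ0 ω)) ∂μ = 0 :=
    hzero g0 _ hg0sm hg0X0int hX0int hc0
  have hF'eq : ∀ ω, F' 0 ω = -(g1 ω * (D ω * (Y ω - μ1 ω))) -
      g0 ω * ((1 - D ω) * (Y ω - μ0 ω)) := by
    intro ω
    simp only [hF'_def, hg1_def, hg0_def, zero_mul, add_zero]
    ring
  have hzint : ∫ ω, F' 0 ω ∂μ = 0 := by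
    have heq2 : ∫ ω, F' 0 ω ∂μ =
        ∫ ω, ((-(g1 * fun ω => D ω * (Y ω - μ1 ω))) ω -
          (g0 * fun ω => (1 - D ω) * (Y ω - μ0 ω)) ω) ∂μ := by
      refine integral_congr_ae (ae_of_all _ fun ω => ?_)
      simp only [Pi.neg_apply, Pi.mul_apply]
      exact hF'eq ω
    have hz1n : ∫ ω, (-(g1 * fun ω => D ω * (Y ω - μ1 ω))) ω ∂μ = 0 := by
      have h5 : ∫ ω, -(g1 ω * (D ω * (Y ω - μ1 ω))) ∂μ = 0 := by
        rw [integral_neg, hz1, neg_zero]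
      exact h5
    have hz0' : ∫ ω, (g0 * fun ω => (1 - D ω) * (Y ω - μ0 ω)) ω ∂μ = 0 := hz0
    rw [heq2, integral_sub hg1X1int.neg hg0X0int, hz1n, hz0']
    simp
  rw [hfeq]
  rw [hzint] at hkey
  exact hkey
end

section
/- Neyman orthogonality of the AIPW score with respect to the outcome models: define f(t) = E[(μ1 + t·h1)(V) - (μ0 + t·h0)(V) + D(Y - (μ1 + t·h1)(V))/π(V) - (1-D)(Y - (μ0 + t·h0)(V))/(1-π(V))], where μd are the true outcome regressions, π the true propensity score, and h1, h0 bounded measurable perturbations of V. Then f(t) = f(0) for all t; in particular f'(0) = 0. -/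
open MeasureTheory

/-- Neyman orthogonality of the AIPW score in the outcome models:
with perturbed outcome models `μd + t·hd` and the true propensity score `π`,
`f(t) = f(0)` for all `t`; in particular `f'(0) = 0`. -/
theorem aipw_neyman_orthogonal_outcome
    {Ω : Type*} (𝒱 : MeasurableSpace Ω) {mΩ : MeasurableSpace Ω} (μ : Measure Ω) [IsProbabilityMeasure μ]
    (h𝒱 : 𝒱 ≤ mΩ)
    (Y D π μ1 μ0 h1 h0 : Ω → ℝ) (ε : ℝ) (hε : 0 < ε)
    (hY : Integrable Y μ) (hD : ∀ ω, D ω = 0 ∨ D ω = 1) (hDmeas : Measurable D)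
    (hπmeas : Measurable[𝒱] π) (hμ1meas : Measurable[𝒱] μ1) (hμ0meas : Measurable[𝒱] μ0)
    (hh1meas : Measurable[𝒱] h1) (hh0meas : Measurable[𝒱] h0)
    (C : ℝ) (hμ1bdd : ∀ ω, |μ1 ω| ≤ C) (hμ0bdd : ∀ ω, |μ0 ω| ≤ C)
    (hh1bdd : ∀ ω, |h1 ω| ≤ C) (hh0bdd : ∀ ω, |h0 ω| ≤ C)
    (hπ : μ[D | 𝒱] =ᵐ[μ] π)
    (hπlb : ∀ᵐ ω ∂μ, ε ≤ π ω) (hπub : ∀ᵐ ω ∂μ, π ω ≤ 1 - ε)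
    (hμ1 : μ[fun ω => D ω * Y ω | 𝒱] =ᵐ[μ] fun ω => π ω * μ1 ω)
    (hμ0 : μ[fun ω => (1 - D ω) * Y ω | 𝒱] =ᵐ[μ] fun ω => (1 - π ω) * μ0 ω)
    (f : ℝ → ℝ)
    (hf : ∀ t : ℝ, f t =
      ∫ ω, ((μ1 ω + t * h1 ω) - (μ0 ω + t * h0 ω)
        + D ω * (Y ω - (μ1 ω + t * h1 ω)) / π ω
        - (1 - D ω) * (Y ω - (μ0 ω + t * h0 ω)) / (1 - π ω)) ∂μ) :
    (∀ t : ℝ, f t = f 0) ∧ HasDerivAt f 0 0 := by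
  -- basic measurability
  have hDm : Measurable[mΩ] D := hDmeas
  have hπm : Measurable[mΩ] π := hπmeas.mono h𝒱 le_rfl
  have hμ1m : Measurable[mΩ] μ1 := hμ1meas.mono h𝒱 le_rfl
  have hμ0m : Measurable[mΩ] μ0 := hμ0meas.mono h𝒱 le_rfl
  have hh1m : Measurable[mΩ] h1 := hh1meas.mono h𝒱 le_rfl
  have hh0m : Measurable[mΩ] h0 := hh0meas.mono h𝒱 le_rfl
  -- C ≥ 0
  haveI : (ae μ).NeBot := ae_neBot.mpr (IsProbabilityMeasure.ne_zero μ)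
  obtain ⟨ω0, -⟩ := hπlb.exists
  have hC0 : 0 ≤ C := (abs_nonneg _).trans (hh1bdd ω0)
  -- D bounds
  have hDabs : ∀ ω, |D ω| ≤ 1 := by
    intro ω; rcases hD ω with h | h <;> simp [h]
  have hDabs' : ∀ ω, |1 - D ω| ≤ 1 := by
    intro ω; rcases hD ω with h | h <;> simp [h]
  -- integrability of bounded a.e.-strongly-measurable functions
  have hbdd_int : ∀ (g : Ω → ℝ) (M : ℝ), AEStronglyMeasurable[mΩ] g μ →
      (∀ᵐ ω ∂μ, |g ω| ≤ M) → Integrable g μ := by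
    intro g M hm hb
    exact Integrable.mono' (integrable_const M) hm (hb.mono fun ω h => by
      simpa [Real.norm_eq_abs] using h)
  have hDint : Integrable D μ := hbdd_int D 1 hDm.aestronglyMeasurable
    (Filter.Eventually.of_forall hDabs)
  have hh1int : Integrable h1 μ := hbdd_int h1 C hh1m.aestronglyMeasurable
    (Filter.Eventually.of_forall hh1bdd)
  have hh0int : Integrable h0 μ := hbdd_int h0 C hh0m.aestronglyMeasurable
    (Filter.Eventually.of_forall hh0bdd)
  -- a.e. positivity facts
  have hπpos : ∀ᵐ ω ∂μ, ε ≤ π ω ∧ ε ≤ 1 - π ω := by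
    filter_upwards [hπlb, hπub] with ω h1 h2
    exact ⟨h1, by linarith⟩
  -- key pull-out lemmas
  have key1 : ∀ φ : Ω → ℝ, Measurable[𝒱] φ → Integrable φ μ →
      Integrable (fun ω => φ ω * D ω) μ →
      ∫ ω, φ ω * D ω ∂μ = ∫ ω, φ ω * π ω ∂μ := by
    intro φ hm hφint hprod
    have h1 : μ[fun ω => φ ω * D ω | 𝒱] =ᵐ[μ] fun ω => φ ω * (μ[D | 𝒱]) ω :=
      condExp_mul_of_stronglyMeasurable_left hm.stronglyMeasurable hprod hDint
    have h2 : (fun ω => φ ω * (μ[D | 𝒱]) ω) =ᵐ[μ] fun ω => φ ω * π ω := by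
      filter_upwards [hπ] with ω h
      rw [h]
    calc ∫ ω, φ ω * D ω ∂μ = ∫ ω, (μ[fun ω => φ ω * D ω | 𝒱]) ω ∂μ :=
          (integral_condExp h𝒱).symm
      _ = ∫ ω, φ ω * π ω ∂μ := integral_congr_ae (h1.trans h2)
  have hDc : μ[fun ω => 1 - D ω | 𝒱] =ᵐ[μ] fun ω => 1 - π ω := by
    have h1 : μ[fun ω => 1 - D ω | 𝒱] =ᵐ[μ] μ[(fun _ => (1:ℝ)) | 𝒱] - μ[D | 𝒱] :=
      condExp_sub (integrable_const 1) hDint 𝒱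
    have h2 : μ[(fun _ => (1:ℝ)) | 𝒱] = fun _ => (1:ℝ) := condExp_const h𝒱 1
    filter_upwards [h1, hπ] with ω hω hπω
    simp only [Pi.sub_apply, h2] at hω
    simp [hω, hπω]
  have hDcint : Integrable (fun ω => 1 - D ω) μ := (integrable_const 1).sub hDint
  have key0 : ∀ φ : Ω → ℝ, Measurable[𝒱] φ → Integrable φ μ →
      Integrable (fun ω => φ ω * (1 - D ω)) μ →
      ∫ ω, φ ω * (1 - D ω) ∂μ = ∫ ω, φ ω * (1 - π ω) ∂μ := by
    intro φ hm hφint hprod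
    have h1 : μ[fun ω => φ ω * (1 - D ω) | 𝒱] =ᵐ[μ]
        fun ω => φ ω * (μ[fun ω => 1 - D ω | 𝒱]) ω :=
      condExp_mul_of_stronglyMeasurable_left hm.stronglyMeasurable hprod hDcint
    have h2 : (fun ω => φ ω * (μ[fun ω => 1 - D ω | 𝒱]) ω) =ᵐ[μ]
        fun ω => φ ω * (1 - π ω) := by
      filter_upwards [hDc] with ω h
      rw [h]
    calc ∫ ω, φ ω * (1 - D ω) ∂μ = ∫ ω, (μ[fun ω => φ ω * (1 - D ω) | 𝒱]) ω ∂μ :=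
          (integral_condExp h𝒱).symm
      _ = ∫ ω, φ ω * (1 - π ω) ∂μ := integral_congr_ae (h1.trans h2)
  -- the perturbation direction
  set g : Ω → ℝ := fun ω =>
    h1 ω - h0 ω - D ω * h1 ω / π ω + (1 - D ω) * h0 ω / (1 - π ω) with hg_def
  set I0 : Ω → ℝ := fun ω =>
    μ1 ω - μ0 ω + D ω * (Y ω - μ1 ω) / π ω - (1 - D ω) * (Y ω - μ0 ω) / (1 - π ω)
    with hI0_def
  -- integrability of the pieces
  have hφ1 : Measurable[𝒱] (fun ω => h1 ω / π ω) := hh1meas.div hπmeas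
  have hφ0 : Measurable[𝒱] (fun ω => h0 ω / (1 - π ω)) :=
    hh0meas.div (measurable_const.sub hπmeas)
  have hφ1b : ∀ᵐ ω ∂μ, |h1 ω / π ω| ≤ C / ε := by
    filter_upwards [hπpos] with ω hω
    rw [abs_div, abs_of_pos (lt_of_lt_of_le hε hω.1)]
    exact div_le_div₀ hC0 (hh1bdd ω) hε hω.1
  have hφ0b : ∀ᵐ ω ∂μ, |h0 ω / (1 - π ω)| ≤ C / ε := by
    filter_upwards [hπpos] with ω hω
    rw [abs_div, abs_of_pos (lt_of_lt_of_le hε hω.2)]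
    exact div_le_div₀ hC0 (hh0bdd ω) hε hω.2
  have hφ1int : Integrable (fun ω => h1 ω / π ω) μ :=
    hbdd_int _ (C / ε) ((hφ1.mono h𝒱 le_rfl).aestronglyMeasurable) hφ1b
  have hφ0int : Integrable (fun ω => h0 ω / (1 - π ω)) μ :=
    hbdd_int _ (C / ε) ((hφ0.mono h𝒱 le_rfl).aestronglyMeasurable) hφ0b
  have hφ1Dint : Integrable (fun ω => h1 ω / π ω * D ω) μ := by
    refine hbdd_int _ (C / ε) ?_ ?_
    · exact ((hφ1.mono h𝒱 le_rfl).mul hDm).aestronglyMeasurable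
    · filter_upwards [hφ1b] with ω hω
      calc |h1 ω / π ω * D ω| = |h1 ω / π ω| * |D ω| := abs_mul _ _
        _ ≤ (C / ε) * 1 := mul_le_mul hω (hDabs ω) (abs_nonneg _)
              (div_nonneg hC0 hε.le)
        _ = C / ε := mul_one _
  have hφ0Dint : Integrable (fun ω => h0 ω / (1 - π ω) * (1 - D ω)) μ := by
    refine hbdd_int _ (C / ε) ?_ ?_
    · exact ((hφ0.mono h𝒱 le_rfl).mul (measurable_const.sub hDm)).aestronglyMeasurable
    · filter_upwards [hφ0b] with ω hω
      calc |h0 ω / (1 - π ω) * (1 - D ω)| = |h0 ω / (1 - π ω)| * |1 - D ω| := abs_mul _ _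
        _ ≤ (C / ε) * 1 := mul_le_mul hω (hDabs' ω) (abs_nonneg _)
              (div_nonneg hC0 hε.le)
        _ = C / ε := mul_one _
  -- ∫ g = 0
  have hU1 : ∫ ω, h1 ω / π ω * D ω ∂μ = ∫ ω, h1 ω ∂μ := by
    rw [key1 _ hφ1 hφ1int hφ1Dint]
    refine integral_congr_ae ?_
    filter_upwards [hπpos] with ω hω
    rw [div_mul_cancel₀]
    exact ne_of_gt (lt_of_lt_of_le hε hω.1)
  have hU0 : ∫ ω, h0 ω / (1 - π ω) * (1 - D ω) ∂μ = ∫ ω, h0 ω ∂μ := by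
    rw [key0 _ hφ0 hφ0int hφ0Dint]
    refine integral_congr_ae ?_
    filter_upwards [hπpos] with ω hω
    rw [div_mul_cancel₀]
    exact ne_of_gt (lt_of_lt_of_le hε hω.2)
  have hgint : Integrable g μ := by
    have : g = fun ω => h1 ω - h0 ω - h1 ω / π ω * D ω + h0 ω / (1 - π ω) * (1 - D ω) := by
      funext ω; simp only [hg_def]; ring
    rw [this]
    exact ((hh1int.sub hh0int).sub hφ1Dint).add hφ0Dint
  have hgzero : ∫ ω, g ω ∂μ = 0 := by
    have hge : g = fun ω =>
        h1 ω - h0 ω - h1 ω / π ω * D ω + h0 ω / (1 - π ω) * (1 - D ω) := by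
      funext ω; simp only [hg_def]; ring
    have hA : Integrable (fun ω => h1 ω - h0 ω) μ := hh1int.sub hh0int
    have hB : Integrable (fun ω => h1 ω - h0 ω - h1 ω / π ω * D ω) μ := hA.sub hφ1Dint
    rw [hge]
    rw [integral_add hB hφ0Dint, integral_sub hA hφ1Dint, integral_sub hh1int hh0int,
      hU1, hU0]
    ring
  -- integrability of I0
  have hT1int : Integrable (fun ω => D ω * (Y ω - μ1 ω) / π ω) μ := by
    refine Integrable.mono' (Integrable.div_const (hY.abs.add (integrable_const C)) ε) ?_ ?_
    · exact ((hDm.aestronglyMeasurable.mul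
        (hY.aestronglyMeasurable.sub hμ1m.aestronglyMeasurable)).mul
        hπm.inv.aestronglyMeasurable)
    · filter_upwards [hπpos] with ω hω
      have hπω : (0:ℝ) < π ω := lt_of_lt_of_le hε hω.1
      rw [Real.norm_eq_abs, abs_div, abs_of_pos hπω, abs_mul]
      calc |D ω| * |Y ω - μ1 ω| / π ω ≤ 1 * (|Y ω| + C) / ε := by
            refine div_le_div₀ (by positivity) ?_ hε hω.1
            exact mul_le_mul (hDabs ω) ((abs_sub _ _).trans
              (by have := hμ1bdd ω; linarith)) (abs_nonneg _) zero_le_one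
        _ = (|Y ω| + C) / ε := by rw [one_mul]
  have hT0int : Integrable (fun ω => (1 - D ω) * (Y ω - μ0 ω) / (1 - π ω)) μ := by
    refine Integrable.mono' (Integrable.div_const (hY.abs.add (integrable_const C)) ε) ?_ ?_
    · exact (((measurable_const.sub hDm).aestronglyMeasurable.mul
        (hY.aestronglyMeasurable.sub hμ0m.aestronglyMeasurable)).mul
        (measurable_const.sub hπm).inv.aestronglyMeasurable)
    · filter_upwards [hπpos] with ω hω
      have hπω : (0:ℝ) < 1 - π ω := lt_of_lt_of_le hε hω.2
      rw [Real.norm_eq_abs, abs_div, abs_of_pos hπω, abs_mul]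
      calc |1 - D ω| * |Y ω - μ0 ω| / (1 - π ω) ≤ 1 * (|Y ω| + C) / ε := by
            refine div_le_div₀ (by positivity) ?_ hε hω.2
            exact mul_le_mul (hDabs' ω) ((abs_sub _ _).trans
              (by have := hμ0bdd ω; linarith)) (abs_nonneg _) zero_le_one
        _ = (|Y ω| + C) / ε := by rw [one_mul]
  have hμ1int : Integrable μ1 μ := hbdd_int μ1 C hμ1m.aestronglyMeasurable
    (Filter.Eventually.of_forall hμ1bdd)
  have hμ0int : Integrable μ0 μ := hbdd_int μ0 C hμ0m.aestronglyMeasurable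
    (Filter.Eventually.of_forall hμ0bdd)
  have hI0int : Integrable I0 μ := by
    have : I0 = fun ω => ((μ1 ω - μ0 ω) + D ω * (Y ω - μ1 ω) / π ω)
        - (1 - D ω) * (Y ω - μ0 ω) / (1 - π ω) := rfl
    rw [this]
    exact ((hμ1int.sub hμ0int).add hT1int).sub hT0int
  -- the main identity f t = f 0 + t * ∫ g
  have hmain : ∀ t : ℝ, f t = ∫ ω, I0 ω ∂μ + t * ∫ ω, g ω ∂μ := by
    intro t
    rw [hf t]
    have heq : (fun ω => (μ1 ω + t * h1 ω) - (μ0 ω + t * h0 ω)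
        + D ω * (Y ω - (μ1 ω + t * h1 ω)) / π ω
        - (1 - D ω) * (Y ω - (μ0 ω + t * h0 ω)) / (1 - π ω))
        = fun ω => I0 ω + t * g ω := by
      funext ω; simp only [hI0_def, hg_def]; ring
    rw [heq, integral_add hI0int (hgint.const_mul t), integral_const_mul]
  have hconst : ∀ t : ℝ, f t = f 0 := by
    intro t
    rw [hmain t, hmain 0, hgzero]
    ring
  refine ⟨hconst, ?_⟩
  have : f = fun _ => f 0 := funext hconst
  rw [this]
  exact hasDerivAt_const 0 (f 0)
end

section
/- The Robinson-score bias under misspecified nuisances is a product of nuisance errors: for constant θ₀, E[((Y - ℓ(V)) - θ₀(D - m(V)))·(D - m(V))] = E[(ℓ₀(V) - ℓ(V) - θ₀(m₀(V) - m(V)))·(m₀(V) - m(V))], where ℓ₀(V) = E[Y | V] and m₀(V) = E[D | V]. -/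
/-!
Write `ε` for the structural error, `ξ = D - m₀` for the treatment noise, `g = m₀ - m` and
`h = ℓ₀ - ℓ - θ₀ g` for the nuisance errors. The Robinson score factors as `(ε + h)(ξ + g)`.
Since `g` and `h` are bounded functions of `V`, they pull out of `E[· | V]`, so the cross terms
`E[g ε]` and `E[h ξ]` vanish because `E[ε | V] = E[ξ | V] = 0`; with `E[ε ξ] = 0` only the
product of nuisance errors `E[h g]` is left.
-/

open MeasureTheory

section

variable {Ω : Type*} {m mΩ : MeasurableSpace Ω} {μ : Measure Ω}

theorem integral_mul_eq_zero_of_condExp_eq_zero (hm : m ≤ mΩ) [SigmaFinite (μ.trim hm)]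
    {f X : Ω → ℝ} (hf : StronglyMeasurable[m] f) (hfX : Integrable (f * X) μ)
    (hX : Integrable X μ) (hXm : μ[X | m] =ᵐ[μ] 0) :
    ∫ ω, f ω * X ω ∂μ = 0 :=
  calc ∫ ω, f ω * X ω ∂μ = ∫ ω, μ[f * X | m] ω ∂μ := (integral_condExp hm).symm
    _ = ∫ ω, (f * μ[X | m]) ω ∂μ :=
      integral_congr_ae (condExp_mul_of_stronglyMeasurable_left hf hfX hX)
    _ = 0 := integral_eq_zero_of_ae <| by
      filter_upwards [hXm] with ω hω
      simp [hω]

theorem integral_add_mul_add_eq_integral_mul [IsFiniteMeasure μ] (hm : m ≤ mΩ)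
    {ε ξ g h : Ω → ℝ} (hε : MemLp ε 2 μ) (hξ : MemLp ξ 2 μ) (hg : MemLp g 2 μ)
    (hh : MemLp h 2 μ) (hgm : StronglyMeasurable[m] g) (hhm : StronglyMeasurable[m] h)
    (hεm : μ[ε | m] =ᵐ[μ] 0) (hξm : μ[ξ | m] =ᵐ[μ] 0) (hεξ : ∫ ω, ε ω * ξ ω ∂μ = 0) :
    ∫ ω, (ε ω + h ω) * (ξ ω + g ω) ∂μ = ∫ ω, h ω * g ω ∂μ := by
  have iεξ := hε.integrable_mul hξ
  have igε := hg.integrable_mul hε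
  have ihξ := hh.integrable_mul hξ
  have hgε : ∫ ω, g ω * ε ω ∂μ = 0 :=
    integral_mul_eq_zero_of_condExp_eq_zero hm hgm igε (hε.integrable one_le_two) hεm
  have hhξ : ∫ ω, h ω * ξ ω ∂μ = 0 :=
    integral_mul_eq_zero_of_condExp_eq_zero hm hhm ihξ (hξ.integrable one_le_two) hξm
  calc ∫ ω, (ε ω + h ω) * (ξ ω + g ω) ∂μ
      = ∫ ω, ε ω * ξ ω + g ω * ε ω + h ω * ξ ω + h ω * g ω ∂μ := by
        congr 1 with ω; ring
    _ = ∫ ω, ε ω * ξ ω ∂μ + ∫ ω, g ω * ε ω ∂μ + ∫ ω, h ω * ξ ω ∂μ + ∫ ω, h ω * g ω ∂μ := by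
        rw [integral_add, integral_add, integral_add]
        exacts [iεξ, igε, iεξ.add igε, ihξ, (iεξ.add igε).add ihξ, hh.integrable_mul hg]
    _ = ∫ ω, h ω * g ω ∂μ := by rw [hεξ, hgε, hhξ]; ring

end

theorem robinson_score_bias_product_general
    {Ω : Type*} {mΩ : MeasurableSpace Ω} (μ : Measure Ω) [IsProbabilityMeasure μ]
    (𝒱 : MeasurableSpace Ω) (h𝒱 : 𝒱 ≤ mΩ)
    (Y D eps l0 m0 l m : Ω → ℝ) (θ₀ : ℝ)
    (hY2 : MemLp Y 2 μ) (hD2 : MemLp D 2 μ)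
    (hl0meas : Measurable[𝒱] l0) (hm0meas : Measurable[𝒱] m0)
    (hlmeas : Measurable[𝒱] l) (hmmeas : Measurable[𝒱] m)
    (C : ℝ) (hlbdd : ∀ ω, |l ω| ≤ C) (hmbdd : ∀ ω, |m ω| ≤ C)
    (hl0bdd : ∀ ω, |l0 ω| ≤ C) (hm0bdd : ∀ ω, |m0 ω| ≤ C)
    (hepsdef : ∀ ω, eps ω = Y ω - θ₀ * D ω - (l0 ω - θ₀ * m0 ω))
    (heps : μ[eps | 𝒱] =ᵐ[μ] 0)
    (hepsxi : ∫ ω, eps ω * (D ω - m0 ω) ∂μ = 0)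
    (hxi : μ[fun ω => D ω - m0 ω | 𝒱] =ᵐ[μ] 0) :
    ∫ ω, ((Y ω - l ω) - θ₀ * (D ω - m ω)) * (D ω - m ω) ∂μ =
      ∫ ω, (l0 ω - l ω - θ₀ * (m0 ω - m ω)) * (m0 ω - m ω) ∂μ := by
  have memLp_of_bdd {f : Ω → ℝ} (hf : Measurable[𝒱] f) (hfC : ∀ ω, |f ω| ≤ C) :
      MemLp f 2 μ :=
    MemLp.of_bound (hf.mono h𝒱 le_rfl).aestronglyMeasurable C (ae_of_all _ hfC)
  have hl0 := memLp_of_bdd hl0meas hl0bdd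
  have hm0 := memLp_of_bdd hm0meas hm0bdd
  have hl := memLp_of_bdd hlmeas hlbdd
  have hm := memLp_of_bdd hmmeas hmbdd
  have heps2 : MemLp eps 2 μ := by
    rw [funext hepsdef]
    exact (hY2.sub (hD2.const_mul θ₀)).sub (hl0.sub (hm0.const_mul θ₀))
  rw [← integral_add_mul_add_eq_integral_mul (ξ := fun ω => D ω - m0 ω)
    (g := fun ω => m0 ω - m ω) (h := fun ω => l0 ω - l ω - θ₀ * (m0 ω - m ω)) h𝒱 heps2
    (hD2.sub hm0) (hm0.sub hm) ((hl0.sub hl).sub ((hm0.sub hm).const_mul θ₀))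
    (hm0meas.sub hmmeas).stronglyMeasurable
    ((hl0meas.sub hlmeas).sub ((hm0meas.sub hmmeas).const_mul θ₀)).stronglyMeasurable
    heps hxi hepsxi]
  congr 1 with ω
  rw [hepsdef]
  ring

/-- The Robinson-score bias under misspecified nuisances is a product
of nuisance errors: for constant `θ₀`,
`E[((Y - ℓ(V)) - θ₀(D - m(V)))·(D - m(V))]
  = E[(ℓ₀(V) - ℓ(V) - θ₀(m₀(V) - m(V)))·(m₀(V) - m(V))]`,
where `ℓ₀ = E[Y|V]` and `m₀ = E[D|V]`. -/
theorem robinson_score_bias_product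
    {Ω : Type*} {mΩ : MeasurableSpace Ω} (μ : Measure Ω) [IsProbabilityMeasure μ]
    (𝒱 : MeasurableSpace Ω) (h𝒱 : 𝒱 ≤ mΩ)
    (Y D eps l0 m0 l m : Ω → ℝ) (θ₀ : ℝ)
    (hY2 : MemLp Y 2 μ) (hD2 : MemLp D 2 μ)
    (hl0meas : Measurable[𝒱] l0) (hm0meas : Measurable[𝒱] m0)
    (hl0 : μ[Y | 𝒱] =ᵐ[μ] l0) (hm0 : μ[D | 𝒱] =ᵐ[μ] m0)
    (hlmeas : Measurable[𝒱] l) (hmmeas : Measurable[𝒱] m)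
    (C : ℝ) (hlbdd : ∀ ω, |l ω| ≤ C) (hmbdd : ∀ ω, |m ω| ≤ C)
    (hl0bdd : ∀ ω, |l0 ω| ≤ C) (hm0bdd : ∀ ω, |m0 ω| ≤ C)
    (hepsdef : ∀ ω, eps ω = Y ω - θ₀ * D ω - (l0 ω - θ₀ * m0 ω))
    (heps : μ[eps | 𝒱] =ᵐ[μ] 0)
    (hepsxi : ∫ ω, eps ω * (D ω - m0 ω) ∂μ = 0)
    (hxi : μ[fun ω => D ω - m0 ω | 𝒱] =ᵐ[μ] 0) :
    ∫ ω, ((Y ω - l ω) - θ₀ * (D ω - m ω)) * (D ω - m ω) ∂μ =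
      ∫ ω, (l0 ω - l ω - θ₀ * (m0 ω - m ω)) * (m0 ω - m ω) ∂μ :=
  robinson_score_bias_product_general μ 𝒱 h𝒱 Y D eps l0 m0 l m θ₀ hY2 hD2 hl0meas hm0meas hlmeas
    hmmeas C hlbdd hmbdd hl0bdd hm0bdd hepsdef heps hepsxi hxi
end
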